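/- The identity operator on the Banach lattice c of convergent sequences is a quasi Levi operator: every norm-bounded increasing net in c is order-Cauchy. -/

import Mathlib

/-!
A norm-bounded increasing net `x` in `c` converges in every coordinate (monotone convergence in `ℝ`),
so the differences `x α - x β` form a uniformly bounded net tending to `0` coordinatewise. Such a
net is eventually dominated by each sequence equal to `ε` on the first `k` coordinates and to the
uniform bound afterwards, and the infimum of these sequences in `c` is `0`. The eventual dominants
of a net are closed under `⊓`, so they form the downward directed family that order convergence
asks for.
-/

/-- Order convergence of a net. -/
def OConvNet {ι F : Type*} [Preorder ι] [Lattice F] [AddCommGroup F]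
    (x : ι → F) (x₀ : F) : Prop :=
  ∃ D : Set F, D.Nonempty ∧ DirectedOn (· ≥ ·) D ∧ IsGLB D 0 ∧
    ∀ y ∈ D, ∃ α₀, ∀ α, α₀ ≤ α → |x α - x₀| ≤ y

/-- Order convergence of a sequence. -/
def OConvSeq {F : Type*} [Lattice F] [AddCommGroup F] (x : ℕ → F) (x₀ : F) : Prop :=
  ∃ y : ℕ → F, Antitone y ∧ IsGLB (Set.range y) 0 ∧
    ∀ m, ∃ n₀, ∀ n, n₀ ≤ n → |x n - x₀| ≤ y m

/-- A net is order-Cauchy if its double net of differences order converges to `0`. -/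
def OCauchyNet {ι F : Type*} [Preorder ι] [Lattice F] [AddCommGroup F]
    (x : ι → F) : Prop :=
  OConvNet (fun p : ι × ι => x p.1 - x p.2) (0 : F)

/-- A sequence is order-Cauchy if its double sequence of differences order converges to `0`. -/
def OCauchySeq' {F : Type*} [Lattice F] [AddCommGroup F] (x : ℕ → F) : Prop :=
  OConvNet (fun p : ℕ × ℕ => x p.1 - x p.2) (0 : F)

section Maps
variable {E F : Type*} [Lattice E] [AddCommGroup E] [Norm E] [Lattice F] [AddCommGroup F]

def IsLeviMap (T : E → F) : Prop :=
  ∀ (ι : Type) [Nonempty ι] [Preorder ι] [IsDirected ι (· ≤ ·)],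
    ∀ x : ι → E, Monotone x → (∃ C, ∀ α, ‖x α‖ ≤ C) →
      ∃ x₀ : E, OConvNet (fun α => T (x α)) (T x₀)

def IsSigmaLeviMap (T : E → F) : Prop :=
  ∀ x : ℕ → E, Monotone x → (∃ C, ∀ n, ‖x n‖ ≤ C) →
    ∃ x₀ : E, OConvSeq (fun n => T (x n)) (T x₀)

def IsCqLeviMap (T : E → F) : Prop :=
  ∀ (ι : Type) [Nonempty ι] [Preorder ι] [IsDirected ι (· ≤ ·)],
    ∀ x : ι → E, Monotone x → (∃ C, ∀ α, ‖x α‖ ≤ C) →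
      ∃ y₀ : F, OConvNet (fun α => T (x α)) y₀

def IsCqSigmaLeviMap (T : E → F) : Prop :=
  ∀ x : ℕ → E, Monotone x → (∃ C, ∀ n, ‖x n‖ ≤ C) →
    ∃ y₀ : F, OConvSeq (fun n => T (x n)) y₀

def IsQLeviMap (T : E → F) : Prop :=
  ∀ (ι : Type) [Nonempty ι] [Preorder ι] [IsDirected ι (· ≤ ·)],
    ∀ x : ι → E, Monotone x → (∃ C, ∀ α, ‖x α‖ ≤ C) →
      OCauchyNet (fun α => T (x α))

def IsQSigmaLeviMap (T : E → F) : Prop :=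
  ∀ x : ℕ → E, Monotone x → (∃ C, ∀ n, ‖x n‖ ≤ C) →
    OCauchySeq' (fun n => T (x n))

end Maps

open Filter Topology

/-- The subspace `c` of convergent real sequences. -/
def cSub : Submodule ℝ (ℕ → ℝ) where
  carrier := {x | ∃ l : ℝ, Tendsto x atTop (nhds l)}
  add_mem' := by rintro x y ⟨l, hl⟩ ⟨m, hm⟩; exact ⟨l + m, hl.add hm⟩
  zero_mem' := ⟨0, tendsto_const_nhds⟩
  smul_mem' := by rintro c x ⟨l, hl⟩; exact ⟨c * l, hl.const_mul c⟩

/-- The subspace `c₀` of real null sequences. -/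
def c0Sub : Submodule ℝ (ℕ → ℝ) where
  carrier := {x | Tendsto x atTop (nhds 0)}
  add_mem' := by intro x y hx hy; have := hx.add hy; simp only [add_zero] at this; exact this
  zero_mem' := tendsto_const_nhds
  smul_mem' := by intro c x hx; have := hx.const_mul c; simp only [mul_zero] at this; exact this

/-- The subspace `ℓ^∞` of bounded real sequences. -/
def LinfSub : Submodule ℝ (ℕ → ℝ) where
  carrier := {x | ∃ C : ℝ, ∀ n, |x n| ≤ C}
  add_mem' := by
    rintro x y ⟨C, hC⟩ ⟨D, hD⟩
    exact ⟨C + D, fun n => (abs_add_le _ _).trans (add_le_add (hC n) (hD n))⟩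
  zero_mem' := ⟨0, fun n => by simp⟩
  smul_mem' := by
    rintro c x ⟨C, hC⟩
    exact ⟨|c| * C, fun n => by
      simpa [abs_mul] using mul_le_mul_of_nonneg_left (hC n) (abs_nonneg c)⟩

instance : Lattice cSub :=
  { (inferInstance : PartialOrder cSub) with
    sup := fun x y => ⟨x.1 ⊔ y.1, by
      obtain ⟨l, hl⟩ := x.2; obtain ⟨m, hm⟩ := y.2; exact ⟨l ⊔ m, hl.max hm⟩⟩
    inf := fun x y => ⟨x.1 ⊓ y.1, by
      obtain ⟨l, hl⟩ := x.2; obtain ⟨m, hm⟩ := y.2; exact ⟨l ⊓ m, hl.min hm⟩⟩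
    le_sup_left := fun a b => (le_sup_left : a.1 ≤ a.1 ⊔ b.1)
    le_sup_right := fun a b => (le_sup_right : b.1 ≤ a.1 ⊔ b.1)
    sup_le := fun a b c h₁ h₂ => (sup_le h₁ h₂ : a.1 ⊔ b.1 ≤ c.1)
    inf_le_left := fun a b => (inf_le_left : a.1 ⊓ b.1 ≤ a.1)
    inf_le_right := fun a b => (inf_le_right : a.1 ⊓ b.1 ≤ b.1)
    le_inf := fun a b c h₁ h₂ => (le_inf h₁ h₂ : a.1 ≤ b.1 ⊓ c.1) }

instance : Lattice c0Sub :=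
  { (inferInstance : PartialOrder c0Sub) with
    sup := fun x y => ⟨x.1 ⊔ y.1, by
      have := x.2.max y.2; simp only [max_self] at this; exact this⟩
    inf := fun x y => ⟨x.1 ⊓ y.1, by
      have := x.2.min y.2; simp only [min_self] at this; exact this⟩
    le_sup_left := fun a b => (le_sup_left : a.1 ≤ a.1 ⊔ b.1)
    le_sup_right := fun a b => (le_sup_right : b.1 ≤ a.1 ⊔ b.1)
    sup_le := fun a b c h₁ h₂ => (sup_le h₁ h₂ : a.1 ⊔ b.1 ≤ c.1)
    inf_le_left := fun a b => (inf_le_left : a.1 ⊓ b.1 ≤ a.1)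
    inf_le_right := fun a b => (inf_le_right : a.1 ⊓ b.1 ≤ b.1)
    le_inf := fun a b c h₁ h₂ => (le_inf h₁ h₂ : a.1 ≤ b.1 ⊓ c.1) }

instance : Lattice LinfSub :=
  { (inferInstance : PartialOrder LinfSub) with
    sup := fun x y => ⟨x.1 ⊔ y.1, by
      obtain ⟨C, hC⟩ := x.2; obtain ⟨D, hD⟩ := y.2
      exact ⟨C ⊔ D, fun n => by
        have h1 := hC n; have h2 := hD n
        simp only [Pi.sup_apply]
        rcases le_total (x.1 n) (y.1 n) with h | h
        · rw [sup_eq_right.2 h]; exact h2.trans le_sup_right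
        · rw [sup_eq_left.2 h]; exact h1.trans le_sup_left⟩⟩
    inf := fun x y => ⟨x.1 ⊓ y.1, by
      obtain ⟨C, hC⟩ := x.2; obtain ⟨D, hD⟩ := y.2
      exact ⟨C ⊔ D, fun n => by
        have h1 := hC n; have h2 := hD n
        simp only [Pi.inf_apply]
        rcases le_total (x.1 n) (y.1 n) with h | h
        · rw [inf_eq_left.2 h]; exact h1.trans le_sup_left
        · rw [inf_eq_right.2 h]; exact h2.trans le_sup_right⟩⟩
    le_sup_left := fun a b => (le_sup_left : a.1 ≤ a.1 ⊔ b.1)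
    le_sup_right := fun a b => (le_sup_right : b.1 ≤ a.1 ⊔ b.1)
    sup_le := fun a b c h₁ h₂ => (sup_le h₁ h₂ : a.1 ⊔ b.1 ≤ c.1)
    inf_le_left := fun a b => (inf_le_left : a.1 ⊓ b.1 ≤ a.1)
    inf_le_right := fun a b => (inf_le_right : a.1 ⊓ b.1 ≤ b.1)
    le_inf := fun a b c h₁ h₂ => (le_inf h₁ h₂ : a.1 ≤ b.1 ⊓ c.1) }

noncomputable instance : Norm cSub := ⟨fun x => ⨆ n, |x.1 n|⟩
noncomputable instance : Norm c0Sub := ⟨fun x => ⨆ n, |x.1 n|⟩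
noncomputable instance : Norm LinfSub := ⟨fun x => ⨆ n, |x.1 n|⟩

instance Prod.isDirectedOrder {α β : Type*} [LE α] [LE β] [IsDirectedOrder α]
    [IsDirectedOrder β] : IsDirectedOrder (α × β) where
  directed a b :=
    let ⟨c₁, ha₁, hb₁⟩ := directed_of (· ≤ ·) a.1 b.1
    let ⟨c₂, ha₂, hb₂⟩ := directed_of (· ≤ ·) a.2 b.2
    ⟨(c₁, c₂), ⟨ha₁, ha₂⟩, ⟨hb₁, hb₂⟩⟩

section EventualAbsBounds

variable {ι F : Type*} [Preorder ι] [Lattice F] [AddCommGroup F]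

def eventualAbsBounds (x : ι → F) (x₀ : F) : Set F :=
  {y | ∃ α₀, ∀ α, α₀ ≤ α → |x α - x₀| ≤ y}

lemma directedOn_eventualAbsBounds [IsDirectedOrder ι] (x : ι → F) (x₀ : F) :
    DirectedOn (· ≥ ·) (eventualAbsBounds x x₀) := by
  rintro y₁ ⟨α₁, h₁⟩ y₂ ⟨α₂, h₂⟩
  obtain ⟨α₀, hα₁, hα₂⟩ := directed_of (· ≤ ·) α₁ α₂
  exact ⟨y₁ ⊓ y₂, ⟨α₀, fun α hα => le_inf (h₁ α (hα₁.trans hα)) (h₂ α (hα₂.trans hα))⟩,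
    inf_le_left, inf_le_right⟩

lemma oConvNet_of_isGLB_eventualAbsBounds [IsDirectedOrder ι] {x : ι → F} {x₀ : F}
    (hne : (eventualAbsBounds x x₀).Nonempty) (hglb : IsGLB (eventualAbsBounds x x₀) 0) :
    OConvNet x x₀ :=
  ⟨_, hne, directedOn_eventualAbsBounds x x₀, hglb, fun _ hy => hy⟩

end EventualAbsBounds

namespace cSub

lemma le_iff_forall_apply_le {x y : cSub} : x ≤ y ↔ ∀ n, x.1 n ≤ y.1 n := Iff.rfl

@[simp] lemma abs_apply (x : cSub) (n : ℕ) : (|x|).1 n = |x.1 n| := rfl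

lemma abs_apply_le_norm (x : cSub) (n : ℕ) : |x.1 n| ≤ ‖x‖ := by
  obtain ⟨l, hl⟩ := x.2
  exact le_ciSup hl.abs.bddAbove_range n

def step (k : ℕ) (a b : ℝ) : cSub :=
  ⟨fun n => if n ≤ k then a else b, b, tendsto_const_nhds.congr' <| by
    filter_upwards [eventually_gt_atTop k] with n hn
    rw [if_neg hn.not_ge]⟩

@[simp] lemma step_apply (k : ℕ) (a b : ℝ) (n : ℕ) :
    (step k a b).1 n = if n ≤ k then a else b := rfl

variable {κ : Type*} [Preorder κ] [IsDirectedOrder κ] [Nonempty κ] {z : κ → cSub} {M : ℝ}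

lemma step_mem_eventualAbsBounds (hM : ∀ β n, |(z β).1 n| ≤ M)
    (hz : ∀ n, Tendsto (fun β => (z β).1 n) atTop (𝓝 0)) (k : ℕ) {ε : ℝ} (hε : 0 < ε) :
    step k ε M ∈ eventualAbsBounds z 0 := by
  have hhead : ∀ᶠ β in atTop, ∀ n ∈ Set.Iic k, |(z β).1 n| ≤ ε :=
    (Set.finite_Iic k).eventually_all.2 fun n _ =>
      (hz n).abs.eventually (ge_mem_nhds (by simpa using hε))
  obtain ⟨β₀, hβ₀⟩ := eventually_atTop.1 hhead
  refine ⟨β₀, fun β hβ => le_iff_forall_apply_le.2 fun n => ?_⟩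
  rw [sub_zero, abs_apply, step_apply]
  split_ifs with hn
  · exact hβ₀ β hβ n hn
  · exact hM β n

theorem oConvNet_zero_of_bounded_of_tendsto_apply (hM : ∀ β n, |(z β).1 n| ≤ M)
    (hz : ∀ n, Tendsto (fun β => (z β).1 n) atTop (𝓝 0)) : OConvNet z 0 := by
  refine oConvNet_of_isGLB_eventualAbsBounds ⟨_, step_mem_eventualAbsBounds hM hz 0 one_pos⟩
    ⟨fun y ⟨β₀, hβ₀⟩ => le_iff_forall_apply_le.2 fun n => ?_, fun w hw => ?_⟩
  · simpa using (abs_nonneg _).trans (le_iff_forall_apply_le.1 (hβ₀ β₀ le_rfl) n)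
  · refine le_iff_forall_apply_le.2 fun n => le_of_forall_pos_le_add fun ε hε => ?_
    simpa using le_iff_forall_apply_le.1 (hw (step_mem_eventualAbsBounds hM hz n hε)) n

end cSub

/-- the identity on `c` is quasi Levi: every norm-bounded increasing
net in `c` is order-Cauchy. -/
theorem id_c_qLevi : IsQLeviMap (id : cSub → cSub) := by
  intro ι _ _ _ x hx ⟨C, hC⟩
  have hbound : ∀ α n, |(x α).1 n| ≤ C := fun α n => (cSub.abs_apply_le_norm _ n).trans (hC α)
  have hlim : ∀ n, Tendsto (fun α => (x α).1 n) atTop (𝓝 (⨆ α, (x α).1 n)) := fun n =>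
    tendsto_atTop_ciSup (fun a b hab => hx hab n)
      ⟨C, Set.forall_mem_range.2 fun α => (abs_le.1 (hbound α n)).2⟩
  refine cSub.oConvNet_zero_of_bounded_of_tendsto_apply (M := C + C) (fun p n => ?_) fun n => ?_
  · exact (abs_sub _ _).trans (add_le_add (hbound p.1 n) (hbound p.2 n))
  · rw [← prod_atTop_atTop_eq, ← sub_self (⨆ α, (x α).1 n)]
    exact ((hlim n).comp tendsto_fst).sub ((hlim n).comp tendsto_snd)
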